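/- Let S be a nonempty compact set and N, D continuous with D > 0 on S, and let F(α) = max_{x∈S} [N(x) − α·D(x)]. Then F(α*) = 0 if and only if α* = max_{x∈S} N(x)/D(x). -/

import Mathlib

open Set

theorem IsCompact.sSup_eq_iff_isGreatest {α : Type*} [ConditionallyCompleteLinearOrder α]
    [TopologicalSpace α] [ClosedIciTopology α] {s : Set α} (hs : IsCompact s) (hne : s.Nonempty)
    {a : α} : sSup s = a ↔ IsGreatest s a :=
  ⟨fun h => h ▸ hs.isGreatest_sSup hne, IsGreatest.csSup_eq⟩

/-- Since `D > 0`, the sign of `N x - α * D x` is the sign of `N x / D x - α`. -/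
theorem isGreatest_sub_mul_image_zero_iff {X : Type*} {S : Set X} {N D : X → ℝ}
    (hD : ∀ x ∈ S, 0 < D x) (α : ℝ) :
    IsGreatest ((fun x => N x - α * D x) '' S) 0 ↔ IsGreatest ((fun x => N x / D x) '' S) α := by
  have hle : ∀ x ∈ S, N x - α * D x ≤ 0 ↔ N x / D x ≤ α := fun x hx => by
    rw [sub_nonpos, div_le_iff₀ (hD x hx)]
  have heq : ∀ x ∈ S, N x - α * D x = 0 ↔ N x / D x = α := fun x hx => by
    rw [sub_eq_zero, div_eq_iff (hD x hx).ne']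
  rw [IsGreatest, IsGreatest, mem_upperBounds, mem_upperBounds, forall_mem_image, forall_mem_image,
    mem_image, mem_image]
  exact and_congr (exists_congr fun x => and_congr_right (heq x))
    (forall₂_congr hle)

/-- Dinkelbach's theorem: `F(α*) = 0` iff `α*` equals the optimal value of the fractional
program `max_{x∈S} N x / D x`. -/
theorem dinkelbach_zero_iff (n : ℕ) (S : Set (Fin n → ℝ)) (hS : S.Nonempty)
    (hSc : IsCompact S) (N D : (Fin n → ℝ) → ℝ) (hN : Continuous N) (hD : Continuous D)
    (hDpos : ∀ x ∈ S, 0 < D x) (αstar : ℝ) :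
    sSup ((fun x => N x - αstar * D x) '' S) = 0 ↔
      αstar = sSup ((fun x => N x / D x) '' S) := by
  have hg : ContinuousOn (fun x => N x - αstar * D x) S :=
    (hN.sub (continuous_const.mul hD)).continuousOn
  have hf : ContinuousOn (fun x => N x / D x) S :=
    hN.continuousOn.div hD.continuousOn fun x hx => (hDpos x hx).ne'
  rw [eq_comm (a := αstar), (hSc.image_of_continuousOn hg).sSup_eq_iff_isGreatest (hS.image _),
    (hSc.image_of_continuousOn hf).sSup_eq_iff_isGreatest (hS.image _)]
  exact isGreatest_sub_mul_image_zero_iff hDpos αstar
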